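/- For a monic cubic polynomial s³ + a₂s² + a₁s + a₀ with real coefficients, all roots have strictly negative real part if and only if a₂ > 0, a₀ > 0, and a₂a₁ > a₀ (Routh–Hurwitz criterion for n = 3). -/

import Mathlib

/-!
A real cubic has a real root `α`, so it factors as `(z - α) (z² + b z + c)` with `b, c` real, and
its roots lie in the open left half-plane iff `α < 0` and `b, c > 0`: a real quadratic with a
non-real root `z` has `re z = -b/2` and `c = |z|²`, and otherwise both roots are real with sum
`-b` and product `c`. Rewriting `a₂ = b - α`, `a₁ = c - α b`, `a₀ = -α c`, the Hurwitz
determinant is `a₂ a₁ - a₀ = b (a₁ + α²)`, and the equivalence becomes elementary algebra.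
-/

open Polynomial Filter

theorem Polynomial.exists_isRoot_of_odd_natDegree_real {p : ℝ[X]} (hp : Odd p.natDegree) :
    ∃ x, p.IsRoot x := by
  wlog hlc : 0 ≤ p.leadingCoeff generalizing p
  · obtain ⟨x, hx⟩ :=
      this (p := -p) (by rwa [natDegree_neg]) (by simp only [leadingCoeff_neg]; linarith)
    exact ⟨x, by simpa using hx⟩
  have hdeg : 0 < p.degree := natDegree_pos_iff_degree_pos.mp hp.pos
  have hreflect : 0 < (p.comp (-X)).degree := by
    rw [← natDegree_pos_iff_degree_pos, natDegree_comp]; simpa using hp.pos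
  have hreflect_lc : (p.comp (-X)).leadingCoeff ≤ 0 := by
    rw [leadingCoeff_comp (by simp)]; simp [hp.neg_one_pow, hlc]
  have h_bot : Tendsto (fun x => p.eval x) atBot atBot := by
    simpa [Function.comp_def] using
      (tendsto_atBot_of_leadingCoeff_nonpos _ hreflect hreflect_lc).comp tendsto_neg_atBot_atTop
  exact p.continuous.surjective (tendsto_atTop_of_leadingCoeff_nonneg p hdeg hlc) h_bot 0

theorem exists_cubic_eq_sub_mul_quadratic (a₀ a₁ a₂ : ℝ) :
    ∃ α b c : ℝ, a₂ = b - α ∧ a₁ = c - α * b ∧ a₀ = -(α * c) := by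
  have hdeg : (X ^ 3 + C a₂ * X ^ 2 + C a₁ * X + C a₀).natDegree = 3 := by
    simpa using natDegree_cubic (a := (1 : ℝ)) (b := a₂) (c := a₁) (d := a₀) one_ne_zero
  obtain ⟨α, hα⟩ := exists_isRoot_of_odd_natDegree_real (by rw [hdeg]; decide)
  simp only [IsRoot, eval_add, eval_mul, eval_pow, eval_X, eval_C] at hα
  exact ⟨α, a₂ + α, a₁ + α * (a₂ + α), by ring, by ring, by linear_combination hα⟩

section Quadratic

variable {b c : ℝ} {z : ℂ}

theorem im_eq_zero_or_re_eq_of_quadratic_eq_zero (hz : z ^ 2 + b * z + c = 0) :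
    z.im = 0 ∨ z.re = -b / 2 := by
  have him := congrArg Complex.im hz
  simp only [pow_two, Complex.add_im, Complex.mul_im, Complex.ofReal_re, Complex.ofReal_im,
    zero_mul, add_zero, Complex.zero_im] at him
  rcases mul_eq_zero.mp (show z.im * (2 * z.re + b) = 0 by linear_combination him) with h | h
  · exact .inl h
  · exact .inr (by linarith)

theorem re_neg_of_quadratic_eq_zero (hb : 0 < b) (hc : 0 < c) (hz : z ^ 2 + b * z + c = 0) :
    z.re < 0 := by
  rcases im_eq_zero_or_re_eq_of_quadratic_eq_zero hz with him | hre
  · have hre := congrArg Complex.re hz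
    simp only [pow_two, Complex.add_re, Complex.mul_re, him, mul_zero, sub_zero, Complex.ofReal_re,
      Complex.ofReal_im, Complex.zero_re] at hre
    nlinarith
  · rw [hre]; linarith

theorem pos_of_forall_quadratic_eq_zero_re_neg
    (h : ∀ z : ℂ, z ^ 2 + b * z + c = 0 → z.re < 0) : 0 < b ∧ 0 < c := by
  obtain ⟨s, hs⟩ := IsAlgClosed.exists_eq_mul_self (discrim 1 (b : ℂ) c)
  obtain ⟨z, hz⟩ := exists_quadratic_eq_zero one_ne_zero ⟨s, hs⟩
  replace hz : z ^ 2 + b * z + c = 0 := by linear_combination hz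
  set w : ℂ := -b - z with hw
  have hw_root : w ^ 2 + b * w + c = 0 := by linear_combination hz
  have hzw : z * w = c := by linear_combination -hz
  have hw_re : w.re = -b - z.re := by simp [hw]
  have hw_im : w.im = -z.im := by simp [hw]
  have hz_neg := h z hz
  have hw_neg := h w hw_root
  refine ⟨by linarith, ?_⟩
  rw [← Complex.ofReal_re c, ← hzw, Complex.mul_re, hw_re, hw_im]
  rcases im_eq_zero_or_re_eq_of_quadratic_eq_zero hz with him | hre
  · rw [him]; nlinarith
  · rw [hre]; nlinarith [sq_nonneg z.im]

theorem forall_quadratic_eq_zero_re_neg_iff (b c : ℝ) :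
    (∀ z : ℂ, z ^ 2 + b * z + c = 0 → z.re < 0) ↔ 0 < b ∧ 0 < c :=
  ⟨pos_of_forall_quadratic_eq_zero_re_neg, fun ⟨hb, hc⟩ _ => re_neg_of_quadratic_eq_zero hb hc⟩

end Quadratic

theorem cubic_hurwitz_conditions_iff (α b c : ℝ) :
    (0 < b - α ∧ 0 < -(α * c) ∧ (b - α) * (c - α * b) > -(α * c)) ↔ α < 0 ∧ 0 < b ∧ 0 < c := by
  have hdet : (b - α) * (c - α * b) - -(α * c) = b * (c - α * b + α ^ 2) := by ring
  constructor
  · rintro ⟨h₂, h₀, hdet_pos⟩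
    have h₁ : 0 < c - α * b := by nlinarith
    have hα : α < 0 := by
      by_contra! hα
      -- `α ≥ 0` would be a root of a cubic whose coefficients are all positive
      nlinarith [mul_nonneg hα (mul_nonneg hα hα)]
    refine ⟨hα, ?_, by nlinarith⟩
    nlinarith [sq_nonneg α]
  · rintro ⟨hα, hb, hc⟩
    refine ⟨by linarith, by nlinarith, ?_⟩
    nlinarith [mul_pos (mul_pos hb hb) (neg_pos.mpr hα), mul_pos hb hc,
      mul_nonneg hb.le (sq_nonneg α)]

theorem routh_hurwitz_deg_three (a₀ a₁ a₂ : ℝ) :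
    (∀ z : ℂ, z ^ 3 + (a₂ : ℂ) * z ^ 2 + (a₁ : ℂ) * z + (a₀ : ℂ) = 0 → z.re < 0) ↔
      (0 < a₂ ∧ 0 < a₀ ∧ a₂ * a₁ > a₀) := by
  obtain ⟨α, b, c, rfl, rfl, rfl⟩ := exists_cubic_eq_sub_mul_quadratic a₀ a₁ a₂
  have hfactor : ∀ z : ℂ, z ^ 3 + ((b - α : ℝ) : ℂ) * z ^ 2 + ((c - α * b : ℝ) : ℂ) * z
      + ((-(α * c) : ℝ) : ℂ) = (z - α) * (z ^ 2 + b * z + c) := by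
    intro z; push_cast; ring
  simp only [hfactor, mul_eq_zero, or_imp, forall_and, sub_eq_zero, forall_eq, Complex.ofReal_re,
    forall_quadratic_eq_zero_re_neg_iff, cubic_hurwitz_conditions_iff]
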